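/- If (A⊗C,α⊗γ) is an (A,α)-Hom-coring with comultiplication Δ(a⊗c)=(α^{-1}(a)⊗c_1)⊗_A(1⊗c_2), counit ε(a⊗c)=α(a)ε_C(c), and left action a(a'⊗c)=α^{-1}(a)a'⊗γ(c), then the map ψ:C⊗A→A⊗C, c⊗a↦(1⊗γ^{-1}(c))·a (using the right A-action of the coring) makes [(A,α),(C,γ)]_ψ a Hom-entwining structure; i.e., ψ satisfies (aa')_κ⊗γ(c)^κ=a_κa'_λ⊗γ(c^{κλ}), α^{-1}(a_κ)⊗c^κ_1⊗c^κ_2=α^{-1}(a)_{κλ}⊗c_1^λ⊗c_2^κ, 1_κ⊗c^κ=1⊗c, and a_κε(c^κ)=aε(c). -/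
import Mathlib


open TensorProduct

namespace HomPaper

variable {k : Type*} [CommRing k]
variable {A C V : Type*}
variable [AddCommGroup A] [Module k A] [AddCommGroup C] [Module k C]
variable [AddCommGroup V] [Module k V]

/-- Monoidal Hom-algebra axioms. -/
def IsHomAlgebra (α : A ≃ₗ[k] A) (mul : A →ₗ[k] A →ₗ[k] A) (one : A) : Prop :=
  (∀ a b c, mul (α a) (mul b c) = mul (mul a b) (α c)) ∧
  (∀ a, mul a one = α a) ∧ (∀ a, mul one a = α a) ∧
  (∀ a b, α (mul a b) = mul (α a) (α b)) ∧ α one = one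

/-- Monoidal Hom-coalgebra axioms. -/
def IsHomCoalgebra (γ : C ≃ₗ[k] C) (Δ : C →ₗ[k] C ⊗[k] C) (ε : C →ₗ[k] k) : Prop :=
  (∀ c, TensorProduct.map γ.symm.toLinearMap Δ (Δ c)
      = TensorProduct.assoc k C C C (TensorProduct.map Δ γ.symm.toLinearMap (Δ c))) ∧
  (∀ c, TensorProduct.lid k C (TensorProduct.map ε LinearMap.id (Δ c)) = γ.symm c) ∧
  (∀ c, TensorProduct.rid k C (TensorProduct.map LinearMap.id ε (Δ c)) = γ.symm c) ∧
  (∀ c, Δ (γ c) = TensorProduct.map γ.toLinearMap γ.toLinearMap (Δ c)) ∧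
  (∀ c, ε (γ c) = ε c)

/-- Hom-entwining structure axioms for ψ : C ⊗ A → A ⊗ C, ψ(c⊗a) = a_κ ⊗ c^κ. -/
def IsHomEntwining (α : A ≃ₗ[k] A) (γ : C ≃ₗ[k] C) (mul : A →ₗ[k] A →ₗ[k] A) (one : A)
    (Δ : C →ₗ[k] C ⊗[k] C) (ε : C →ₗ[k] k) (ψ : C ⊗[k] A →ₗ[k] A ⊗[k] C) : Prop :=
  -- (aa')_κ ⊗ γ(c)^κ = a_κ a'_λ ⊗ γ(c^{κλ})
  (∀ c a a', ψ (γ c ⊗ₜ mul a a')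
      = TensorProduct.map (TensorProduct.lift mul) γ.toLinearMap
          ((TensorProduct.assoc k A A C).symm
            (TensorProduct.map LinearMap.id ψ
              (TensorProduct.assoc k A C A (ψ (c ⊗ₜ a) ⊗ₜ a'))))) ∧
  -- α⁻¹(a_κ) ⊗ c^κ₁ ⊗ c^κ₂ = α⁻¹(a)_{κλ} ⊗ c₁^λ ⊗ c₂^κ
  (∀ c a, TensorProduct.map α.symm.toLinearMap Δ (ψ (c ⊗ₜ a))
      = TensorProduct.assoc k A C C
          (TensorProduct.map ψ LinearMap.id
            ((TensorProduct.assoc k C A C).symm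
              (TensorProduct.map LinearMap.id ψ
                (TensorProduct.assoc k C C A (Δ c ⊗ₜ α.symm a)))))) ∧
  -- 1_κ ⊗ c^κ = 1 ⊗ c
  (∀ c, ψ (c ⊗ₜ one) = one ⊗ₜ c) ∧
  -- a_κ ε(c^κ) = a ε(c)
  (∀ c a, TensorProduct.rid k A (TensorProduct.map LinearMap.id ε (ψ (c ⊗ₜ a))) = ε c • a) ∧
  -- ψ is a morphism in the Hom-category
  (∀ c a, ψ (γ c ⊗ₜ α a) = TensorProduct.map α.toLinearMap γ.toLinearMap (ψ (c ⊗ₜ a)))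

/-- The relations defining `V ⊗_A V` (on top of base relations `R₀` defining the coring
module as a quotient of `V`). -/
def corRel (R₀ : Submodule k V) (χ : V ≃ₗ[k] V)
    (lact : A →ₗ[k] V →ₗ[k] V) (ract : V →ₗ[k] A →ₗ[k] V) : Submodule k (V ⊗[k] V) :=
  Submodule.span k
    ({x | ∃ v a w, x = ract v a ⊗ₜ w - χ v ⊗ₜ lact a (χ.symm w)} ∪
     {x | ∃ r w, r ∈ R₀ ∧ (x = r ⊗ₜ w ∨ x = w ⊗ₜ r)})

/-- Induced left A-action on `V ⊗_A V` (on representatives). -/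
noncomputable def lact2 (α : A ≃ₗ[k] A) (χ : V ≃ₗ[k] V) (lact : A →ₗ[k] V →ₗ[k] V) (a : A) :
    V ⊗[k] V →ₗ[k] V ⊗[k] V :=
  TensorProduct.map (lact (α.symm a)) χ.toLinearMap

/-- Induced right A-action on `V ⊗_A V` (on representatives). -/
noncomputable def ract2 (α : A ≃ₗ[k] A) (χ : V ≃ₗ[k] V) (ract : V →ₗ[k] A →ₗ[k] V) (a : A) :
    V ⊗[k] V →ₗ[k] V ⊗[k] V :=
  TensorProduct.map χ.toLinearMap (ract.flip (α.symm a))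

/-- The relations defining `V ⊗_A (V ⊗_A V)`. -/
def corRel3 (R₀ : Submodule k V) (α : A ≃ₗ[k] A) (χ : V ≃ₗ[k] V)
    (lact : A →ₗ[k] V →ₗ[k] V) (ract : V →ₗ[k] A →ₗ[k] V) :
    Submodule k (V ⊗[k] (V ⊗[k] V)) :=
  Submodule.span k
    ({x | ∃ v a w, x = ract v a ⊗ₜ w - χ v ⊗ₜ lact2 α χ lact a w} ∪
     {x | ∃ v w, w ∈ corRel R₀ χ lact ract ∧ x = v ⊗ₜ w} ∪
     {x | ∃ r w, r ∈ R₀ ∧ x = r ⊗ₜ w})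

/-- `(V,χ)` (modulo the relations `R₀`) together with the A-bimodule structure
`lact`, `ract`, comultiplication representative `Δ` and counit `ε` is an
`(A,α)`-Hom-coring: all axioms are stated on representatives, under the quotient
projections by `R₀` resp. the tensor-relation submodules. -/
def IsHomCoring (α : A ≃ₗ[k] A) (mul : A →ₗ[k] A →ₗ[k] A) (one : A)
    (χ : V ≃ₗ[k] V) (lact : A →ₗ[k] V →ₗ[k] V) (ract : V →ₗ[k] A →ₗ[k] V)
    (R₀ : Submodule k V) (Δ : V →ₗ[k] V ⊗[k] V) (ε : V →ₗ[k] A) : Prop :=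
  -- (V,χ) is an (A,α)-Hom-bimodule
  (∀ a b v, Submodule.Quotient.mk (p := R₀) (lact (mul a b) (χ v))
      = Submodule.Quotient.mk (p := R₀) (lact (α a) (lact b v))) ∧
  (∀ v, Submodule.Quotient.mk (p := R₀) (lact one v) = Submodule.Quotient.mk (p := R₀) (χ v)) ∧
  (∀ v a b, Submodule.Quotient.mk (p := R₀) (ract (χ v) (mul a b))
      = Submodule.Quotient.mk (p := R₀) (ract (ract v a) (α b))) ∧
  (∀ v, Submodule.Quotient.mk (p := R₀) (ract v one) = Submodule.Quotient.mk (p := R₀) (χ v)) ∧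
  (∀ a v b, Submodule.Quotient.mk (p := R₀) (ract (lact a v) (α b))
      = Submodule.Quotient.mk (p := R₀) (lact (α a) (ract v b))) ∧
  (∀ a v, Submodule.Quotient.mk (p := R₀) (χ (lact a v))
      = Submodule.Quotient.mk (p := R₀) (lact (α a) (χ v))) ∧
  (∀ v a, Submodule.Quotient.mk (p := R₀) (χ (ract v a))
      = Submodule.Quotient.mk (p := R₀) (ract (χ v) (α a))) ∧
  (∀ r ∈ R₀, χ r ∈ R₀) ∧
  -- Δ and ε are well defined on the quotient by R₀
  (∀ r ∈ R₀, Submodule.Quotient.mk (p := corRel R₀ χ lact ract) (Δ r) = 0) ∧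
  (∀ r ∈ R₀, ε r = 0) ∧
  -- A-bilinearity of Δ
  (∀ a v, Submodule.Quotient.mk (p := corRel R₀ χ lact ract) (Δ (lact a v))
      = Submodule.Quotient.mk (p := corRel R₀ χ lact ract) (lact2 α χ lact a (Δ v))) ∧
  (∀ v a, Submodule.Quotient.mk (p := corRel R₀ χ lact ract) (Δ (ract v a))
      = Submodule.Quotient.mk (p := corRel R₀ χ lact ract) (ract2 α χ ract a (Δ v))) ∧
  -- A-bilinearity of ε
  (∀ a v, ε (lact a v) = mul a (ε v)) ∧
  (∀ v a, ε (ract v a) = mul (ε v) a) ∧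
  -- Hom-coassociativity: χ⁻¹(c₁) ⊗ Δ(c₂) = c₁₁ ⊗ (c₁₂ ⊗ χ⁻¹(c₂))
  (∀ v, Submodule.Quotient.mk (p := corRel3 R₀ α χ lact ract)
        (TensorProduct.map χ.symm.toLinearMap Δ (Δ v))
      = Submodule.Quotient.mk (p := corRel3 R₀ α χ lact ract)
        (TensorProduct.assoc k V V V (TensorProduct.map Δ χ.symm.toLinearMap (Δ v)))) ∧
  -- counity: ε(c₁)c₂ = c = c₁ε(c₂)
  (∀ v, Submodule.Quotient.mk (p := R₀) (TensorProduct.lift (lact ∘ₗ ε) (Δ v))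
      = Submodule.Quotient.mk (p := R₀) v) ∧
  (∀ v, Submodule.Quotient.mk (p := R₀) (TensorProduct.lift (ract.compl₂ ε) (Δ v))
      = Submodule.Quotient.mk (p := R₀) v) ∧
  -- compatibility with the twisting maps
  (∀ v, Submodule.Quotient.mk (p := corRel R₀ χ lact ract) (Δ (χ v))
      = Submodule.Quotient.mk (p := corRel R₀ χ lact ract)
        (TensorProduct.map χ.toLinearMap χ.toLinearMap (Δ v))) ∧
  (∀ v, ε (χ v) = α (ε v))

end HomPaper

namespace HomPaper

variable {k A C : Type*} [CommRing k]
variable [AddCommGroup A] [Module k A] [AddCommGroup C] [Module k C]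

/-- Left `(A,α)`-action on `A ⊗ C`: `a(a'⊗c) = α⁻¹(a)a' ⊗ γ(c)`. -/
noncomputable def entwLact (α : A ≃ₗ[k] A) (γ : C ≃ₗ[k] C) (mul : A →ₗ[k] A →ₗ[k] A) :
    A →ₗ[k] (A ⊗[k] C) →ₗ[k] A ⊗[k] C :=
  TensorProduct.curry
    ((TensorProduct.map
        ((TensorProduct.lift mul) ∘ₗ TensorProduct.map α.symm.toLinearMap LinearMap.id)
        γ.toLinearMap) ∘ₗ (TensorProduct.assoc k A A C).symm.toLinearMap)

/-- Right `(A,α)`-action on `A ⊗ C`: `(a'⊗c)a = a'·α⁻¹(a)_κ ⊗ γ(c^κ)`. -/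
noncomputable def entwRact (α : A ≃ₗ[k] A) (γ : C ≃ₗ[k] C) (mul : A →ₗ[k] A →ₗ[k] A)
    (ψ : C ⊗[k] A →ₗ[k] A ⊗[k] C) : (A ⊗[k] C) →ₗ[k] A →ₗ[k] A ⊗[k] C :=
  TensorProduct.curry
    ((TensorProduct.map (TensorProduct.lift mul) γ.toLinearMap) ∘ₗ
      (TensorProduct.assoc k A A C).symm.toLinearMap ∘ₗ
        (TensorProduct.map LinearMap.id ψ) ∘ₗ
          (TensorProduct.assoc k A C A).toLinearMap ∘ₗ
            (TensorProduct.map LinearMap.id α.symm.toLinearMap))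

/-- Comultiplication of the Hom-coring `A ⊗ C`:
`Δ(a⊗c) = (α⁻¹(a)⊗c₁) ⊗ (1⊗c₂)`. -/
noncomputable def entwComul (α : A ≃ₗ[k] A) (one : A) (ΔC : C →ₗ[k] C ⊗[k] C) :
    (A ⊗[k] C) →ₗ[k] (A ⊗[k] C) ⊗[k] (A ⊗[k] C) :=
  (TensorProduct.map LinearMap.id ((TensorProduct.mk k A C) one)) ∘ₗ
    (TensorProduct.assoc k A C C).symm.toLinearMap ∘ₗ
      (TensorProduct.map α.symm.toLinearMap ΔC)

/-- Counit of the Hom-coring `A ⊗ C`: `ε(a⊗c) = α(a)·ε_C(c)`. -/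
noncomputable def entwCounit (α : A ≃ₗ[k] A) (εC : C →ₗ[k] k) :
    (A ⊗[k] C) →ₗ[k] A :=
  α.toLinearMap ∘ₗ (TensorProduct.rid k A).toLinearMap ∘ₗ
    TensorProduct.map LinearMap.id εC

set_option maxHeartbeats 2000000 in
/-- If `(A⊗C, α⊗γ)` is an `(A,α)`-Hom-coring with comultiplication
`Δ(a⊗c) = (α⁻¹(a)⊗c₁)⊗_A(1⊗c₂)`, counit `ε(a⊗c) = α(a)ε_C(c)` and left action
`a(a'⊗c) = α⁻¹(a)a'⊗γ(c)` (the right `(A,α)`-action being arbitrary), then the map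
`ψ : C⊗A → A⊗C`, `c⊗a ↦ (1⊗γ⁻¹(c))·a`, makes `[(A,α),(C,γ)]_ψ` a Hom-entwining
structure. -/
theorem homCoring_entwining
    (α : A ≃ₗ[k] A) (mul : A →ₗ[k] A →ₗ[k] A) (one : A)
    (γ : C ≃ₗ[k] C) (ΔC : C →ₗ[k] C ⊗[k] C) (εC : C →ₗ[k] k)
    (hA : IsHomAlgebra α mul one) (hC : IsHomCoalgebra γ ΔC εC)
    (ract : (A ⊗[k] C) →ₗ[k] A →ₗ[k] A ⊗[k] C)
    (hCor : IsHomCoring α mul one (TensorProduct.congr α γ)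
      (entwLact α γ mul) ract (⊥ : Submodule k (A ⊗[k] C))
      (entwComul α one ΔC) (entwCounit α εC)) :
    IsHomEntwining α γ mul one ΔC εC
      (TensorProduct.lift
        (ract ∘ₗ ((TensorProduct.mk k A C) one ∘ₗ γ.symm.toLinearMap))) := by

  classical
  obtain ⟨hAassoc, hAone, hAone', hAmulα, hAαone⟩ := hA
  obtain ⟨-, -, -, hCΔγ, hCεγ⟩ := hC
  obtain ⟨-, -, h3, h4, h5, -, h7, -, -, -, -, h12, -, h14, -, -, -, -, -⟩ := hCor
  have bot_inj : ∀ {x y : A ⊗[k] C},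
      Submodule.Quotient.mk (p := (⊥ : Submodule k (A ⊗[k] C))) x
        = Submodule.Quotient.mk y → x = y := by
    intro x y h
    have := (Submodule.Quotient.eq (⊥ : Submodule k (A ⊗[k] C))).mp h
    simpa [sub_eq_zero] using this
  have h3' : ∀ (v : A ⊗[k] C) (a b : A),
      ract (TensorProduct.congr α γ v) (mul a b) = ract (ract v a) (α b) :=
    fun v a b => bot_inj (h3 v a b)
  have h4' : ∀ v : A ⊗[k] C, ract v one = TensorProduct.congr α γ v :=
    fun v => bot_inj (h4 v)
  have h5' : ∀ (a : A) (v : A ⊗[k] C) (b : A),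
      ract (entwLact α γ mul a v) (α b) = entwLact α γ mul (α a) (ract v b) :=
    fun a v b => bot_inj (h5 a v b)
  have h7' : ∀ (v : A ⊗[k] C) (a : A),
      TensorProduct.congr α γ (ract v a) = ract (TensorProduct.congr α γ v) (α a) :=
    fun v a => bot_inj (h7 v a)
  set ψ := TensorProduct.lift
      (ract ∘ₗ ((TensorProduct.mk k A C) one ∘ₗ γ.symm.toLinearMap)) with hψdef
  have hψ : ∀ (c : C) (a : A), ψ (c ⊗ₜ a) = ract (one ⊗ₜ[k] γ.symm c) a := by
    intro c a; simp [hψdef]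
  have hχ1 : ∀ c : C, TensorProduct.congr α γ (one ⊗ₜ[k] γ.symm c) = one ⊗ₜ c := by
    intro c; simp [hAαone]
  -- (5) morphism property
  have morph : ∀ (c : C) (a : A),
      ψ (γ c ⊗ₜ α a) = TensorProduct.map α.toLinearMap γ.toLinearMap (ψ (c ⊗ₜ a)) := by
    intro c a
    have h := h7' (one ⊗ₜ[k] γ.symm c) a
    rw [hχ1] at h
    rw [hψ, hψ, LinearEquiv.symm_apply_apply, ← h]
    rfl
  -- (3) unit property
  have unit_prop : ∀ c : C, ψ (c ⊗ₜ one) = one ⊗ₜ c := by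
    intro c; rw [hψ, h4']; exact hχ1 c
  -- key lemma L : ract x (α b) expressed through ψ
  have L : ∀ (x : A ⊗[k] C) (b : A),
      ract x (α b) = TensorProduct.map (TensorProduct.lift mul) γ.toLinearMap
        ((TensorProduct.assoc k A A C).symm
          (TensorProduct.map LinearMap.id ψ (TensorProduct.assoc k A C A (x ⊗ₜ b)))) := by
    intro x b
    induction x using TensorProduct.induction_on with
    | zero => simp
    | tmul x₁ x₂ =>
      have hx : entwLact α γ mul x₁ (one ⊗ₜ[k] γ.symm x₂) = x₁ ⊗ₜ x₂ := by
        simp [entwLact, hAone]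
      have hG : ∀ u : A ⊗[k] C, entwLact α γ mul (α x₁) u
          = TensorProduct.map (TensorProduct.lift mul) γ.toLinearMap
              ((TensorProduct.assoc k A A C).symm (x₁ ⊗ₜ u)) := by
        intro u
        induction u using TensorProduct.induction_on with
        | zero => simp
        | tmul u₁ u₂ => simp [entwLact]
        | add u v hu hv => simp only [map_add, tmul_add, hu, hv]
      calc ract (x₁ ⊗ₜ x₂) (α b)
          = ract (entwLact α γ mul x₁ (one ⊗ₜ γ.symm x₂)) (α b) := by rw [hx]
        _ = entwLact α γ mul (α x₁) (ψ (x₂ ⊗ₜ b)) := by rw [h5', ← hψ]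
        _ = _ := by rw [hG]; simp
    | add x y hx hy => simp only [add_tmul, map_add, LinearMap.add_apply, hx, hy]
  -- the auxiliary map θ killing corRel
  set θ : (A ⊗[k] C) ⊗[k] (A ⊗[k] C) →ₗ[k] (A ⊗[k] C) ⊗[k] C :=
    (TensorProduct.map (TensorProduct.lift (ract.compl₂ α.toLinearMap)) LinearMap.id) ∘ₗ
      (TensorProduct.assoc k (A ⊗[k] C) A C).symm.toLinearMap with hθdef
  have θ_tmul : ∀ (v : A ⊗[k] C) (a' : A) (c' : C),
      θ (v ⊗ₜ (a' ⊗ₜ c')) = ract v (α a') ⊗ₜ c' := by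
    intro v a' c'; simp [hθdef]
  have θ_ker : corRel (⊥ : Submodule k (A ⊗[k] C)) (TensorProduct.congr α γ)
      (entwLact α γ mul) ract ≤ LinearMap.ker θ := by
    rw [corRel, Submodule.span_le]
    rintro x (⟨v, a, w, rfl⟩ | ⟨r, w, hr, hx⟩)
    · simp only [SetLike.mem_coe, LinearMap.mem_ker, map_sub, sub_eq_zero]
      induction w using TensorProduct.induction_on with
      | zero => simp
      | tmul a' c' =>
        have hlact : entwLact α γ mul a ((TensorProduct.congr α γ).symm (a' ⊗ₜ c'))
            = mul (α.symm a) (α.symm a') ⊗ₜ c' := by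
          simp [entwLact]
        have hα : α (mul (α.symm a) (α.symm a')) = mul a a' := by
          rw [hAmulα]; simp
        rw [hlact, θ_tmul, θ_tmul, hα, h3']
      | add w₁ w₂ hw₁ hw₂ => simp only [map_add, tmul_add, hw₁, hw₂]
    · rw [Submodule.mem_bot] at hr; subst hr
      rcases hx with rfl | rfl <;> simp
  refine ⟨?_, ?_, ?_, ?_, morph⟩
  · -- (1) multiplicativity
    intro c a a'
    rw [hψ, LinearEquiv.symm_apply_apply, ← hχ1 c, h3', ← hψ, L]
  · -- (2) comultiplication compatibility
    intro c a
    -- P : post-processing map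
    set P : (A ⊗[k] C) ⊗[k] C →ₗ[k] A ⊗[k] (C ⊗[k] C) :=
      (TensorProduct.assoc k A C C).toLinearMap ∘ₗ
        TensorProduct.map (TensorProduct.map α.symm.toLinearMap γ.symm.toLinearMap)
          LinearMap.id with hPdef
    have P_tmul : ∀ (a₁ : A) (c₁ c₂ : C),
        P ((a₁ ⊗ₜ c₁) ⊗ₜ c₂) = α.symm a₁ ⊗ₜ (γ.symm c₁ ⊗ₜ c₂) := by
      intro a₁ c₁ c₂; simp [hPdef]
    -- Claim A : P ∘ θ ∘ Δ = map α.symm ΔC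
    have claimA : ∀ x : A ⊗[k] C,
        P (θ (entwComul α one ΔC x))
          = TensorProduct.map α.symm.toLinearMap ΔC x := by
      intro x
      induction x using TensorProduct.induction_on with
      | zero => simp
      | tmul x₁ x₂ =>
        have hΔ : entwComul α one ΔC (x₁ ⊗ₜ x₂)
            = TensorProduct.map LinearMap.id ((TensorProduct.mk k A C) one)
                ((TensorProduct.assoc k A C C).symm (α.symm x₁ ⊗ₜ ΔC x₂)) := by
          simp [entwComul]
        rw [hΔ]
        simp only [map_tmul, LinearMap.id_coe, id_eq]
        generalize ΔC x₂ = d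
        induction d using TensorProduct.induction_on with
        | zero => simp
        | tmul d₁ d₂ =>
          rw [assoc_symm_tmul]
          simp only [map_tmul, LinearMap.id_coe, id_eq, TensorProduct.mk_apply]
          rw [θ_tmul, hAαone, h4']
          simp only [TensorProduct.congr_tmul]
          rw [P_tmul]
          simp
        | add d₁ d₂ hd₁ hd₂ => simp only [tmul_add, map_add, hd₁, hd₂]
      | add x y hx hy => simp only [map_add, hx, hy]
    -- relation ΔC ∘ γ.symm
    have hΔγ' : ΔC (γ.symm c)
        = TensorProduct.map γ.symm.toLinearMap γ.symm.toLinearMap (ΔC c) := by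
      have h := hCΔγ (γ.symm c)
      rw [γ.apply_symm_apply] at h
      have : ∀ z : C ⊗[k] C,
          TensorProduct.map γ.symm.toLinearMap γ.symm.toLinearMap
            (TensorProduct.map γ.toLinearMap γ.toLinearMap z) = z := by
        intro z
        have := (TensorProduct.congr γ γ).symm_apply_apply z
        exact this
      rw [h, this]
    -- Claim B : the right-hand side
    have claimB : ∀ e : C ⊗[k] C,
        P (θ (ract2 α (TensorProduct.congr α γ) ract a
          (TensorProduct.map LinearMap.id ((TensorProduct.mk k A C) one)
            ((TensorProduct.assoc k A C C).symm
              (one ⊗ₜ TensorProduct.map γ.symm.toLinearMap γ.symm.toLinearMap e)))))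
        = TensorProduct.assoc k A C C
            (TensorProduct.map ψ LinearMap.id
              ((TensorProduct.assoc k C A C).symm
                (TensorProduct.map LinearMap.id ψ
                  (TensorProduct.assoc k C C A (e ⊗ₜ α.symm a))))) := by
      intro e
      induction e using TensorProduct.induction_on with
      | zero => simp
      | tmul c₁ c₂ =>
        simp only [map_tmul, LinearMap.id_coe, id_eq, assoc_symm_tmul, assoc_tmul,
          TensorProduct.mk_apply, ract2, LinearMap.flip_apply, LinearEquiv.coe_coe]
        rw [hχ1, ← hψ]
        generalize ψ (c₂ ⊗ₜ α.symm a) = w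
        induction w using TensorProduct.induction_on with
        | zero => simp
        | tmul w₁ w₂ =>
          simp only [map_tmul, LinearMap.id_coe, id_eq, assoc_symm_tmul, assoc_tmul]
          rw [θ_tmul]
          have hr : ract (one ⊗ₜ[k] c₁) (α w₁)
              = TensorProduct.congr α γ (ψ (c₁ ⊗ₜ w₁)) := by
            rw [hψ, ← hχ1 c₁, ← h7']
          rw [hr]
          generalize ψ (c₁ ⊗ₜ w₁) = u
          induction u using TensorProduct.induction_on with
          | zero => simp
          | tmul u₁ u₂ =>
            simp only [TensorProduct.congr_tmul]
            rw [P_tmul]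
            simp
          | add u₁ u₂ hu₁ hu₂ => simp only [map_add, add_tmul, hu₁, hu₂]
        | add w₁ w₂ hw₁ hw₂ => simp only [map_add, tmul_add, hw₁, hw₂]
      | add e₁ e₂ he₁ he₂ => simp only [map_add, add_tmul, tmul_add, he₁, he₂]
    -- assemble
    have hΔv : entwComul α one ΔC (one ⊗ₜ γ.symm c)
        = TensorProduct.map LinearMap.id ((TensorProduct.mk k A C) one)
            ((TensorProduct.assoc k A C C).symm
              (one ⊗ₜ TensorProduct.map γ.symm.toLinearMap γ.symm.toLinearMap (ΔC c))) := by
      have hone : α.symm one = one :=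
        α.injective (by rw [α.apply_symm_apply, hAαone])
      simp [entwComul, hone, ← hΔγ']
    have key : θ (entwComul α one ΔC (ψ (c ⊗ₜ a)))
        = θ (ract2 α (TensorProduct.congr α γ) ract a
            (entwComul α one ΔC (one ⊗ₜ γ.symm c))) := by
      have h := (Submodule.Quotient.eq _).mp (h12 (one ⊗ₜ γ.symm c) a)
      have h2 := θ_ker h
      rw [LinearMap.mem_ker, map_sub, sub_eq_zero] at h2
      rw [hψ]; exact h2
    calc TensorProduct.map α.symm.toLinearMap ΔC (ψ (c ⊗ₜ a))
        = P (θ (entwComul α one ΔC (ψ (c ⊗ₜ a)))) := (claimA _).symm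
      _ = P (θ (ract2 α (TensorProduct.congr α γ) ract a
            (entwComul α one ΔC (one ⊗ₜ γ.symm c)))) := by rw [key]
      _ = _ := by rw [hΔv]; exact claimB (ΔC c)
  · exact unit_prop
  · -- (4) counit property
    intro c a
    have h := h14 (one ⊗ₜ[k] γ.symm c) a
    have hε1 : entwCounit α εC (one ⊗ₜ[k] γ.symm c) = εC c • one := by
      have : εC (γ.symm c) = εC c := by
        conv_rhs => rw [← γ.apply_symm_apply c]
        rw [hCεγ]
      simp [entwCounit, this, hAαone]
    rw [hε1] at h
    apply α.injective
    have hcount : ∀ x : A ⊗[k] C,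
        α (TensorProduct.rid k A (TensorProduct.map LinearMap.id εC x))
          = entwCounit α εC x := by
      intro x; simp [entwCounit]
    rw [hcount, hψ, h]
    simp [hAone']


end HomPaper
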